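/- arXiv:2508.18454 — 5 statements merged into one kernel-verified Lean document; each statement's English description precedes it below -/
import Mathlib

section
/- For multi-indices α, β, μ, ν ∈ ℤ_{≥0}^n, the Kostant pairing of the Weyl algebra monomials satisfies κ(x^α y^β, x^μ y^ν) = (-1)^{|α|} δ_{α,ν} δ_{β,μ} α! β!. In particular, the monomial basis {x^α y^β} is an orthogonal basis of the Weyl algebra with respect to κ. -/
open scoped BigOperators

/-- Generators of the Weyl algebra: `Sum.inl i` is `xᵢ`, `Sum.inr i` is `yᵢ`. -/
abbrev WGen (n : ℕ) := Fin n ⊕ Fin n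

/-- The symplectic form `ω` with `ω(yᵢ, xⱼ) = δᵢⱼ = -ω(xⱼ, yᵢ)` and `ω` vanishing on
pairs of `x`'s and pairs of `y`'s. -/
def omegaForm {n : ℕ} : WGen n → WGen n → ℂ
  | Sum.inl i, Sum.inr j => if i = j then -1 else 0
  | Sum.inr i, Sum.inl j => if i = j then 1 else 0
  | Sum.inl _, Sum.inl _ => 0
  | Sum.inr _, Sum.inr _ => 0

/-- The list of generators of the monomial `x^α y^β` (all the `x`'s, then all the `y`'s). -/
def monoList {n : ℕ} (α β : Fin n → ℕ) : List (WGen n) :=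
  ((List.finRange n).flatMap fun i => List.replicate (α i) (Sum.inl i)) ++
    ((List.finRange n).flatMap fun i => List.replicate (β i) (Sum.inr i))

/-- The Kostant pairing `κ` on (normally ordered) monomials of the Weyl algebra, computed
via the quantization isomorphism with the symmetric algebra:
`κ(u₁⋯u_p, v₁⋯v_p) = Σ_{π ∈ S_p} ω(u₁, v_{π(1)}) ⋯ ω(u_p, v_{π(p)})`, and `κ = 0` on
monomials of different degrees. -/
noncomputable def kostant {n : ℕ} (u v : List (WGen n)) : ℂ :=
  if h : u.length = v.length then
    ∑ π : Equiv.Perm (Fin u.length), ∏ i, omegaForm (u.get i) (v.get (Fin.cast h (π i)))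
  else 0

/-!
Writing `ω(a, b) = ε(a) · [b = a*]`, where `a*` swaps `xᵢ ↔ yᵢ` and `ε(xᵢ) = -1`, `ε(yᵢ) = 1`,
the term of `π` in `κ(u, v)` is `∏ ε(uₖ)` if `v ∘ π = u*` and `0` otherwise. So `κ(u, v)` is
`∏ ε(uₖ)` times the number of permutations carrying `v` onto `u*`. Such a permutation exists iff
every generator occurs as often in `v` as in `u*`, and then they form a coset of the stabiliser
of `u*`, of order `∏ₐ (multiplicity of a)!`. For `u = x^α y^β`, `v = x^μ y^ν` the multiplicities
match iff `α = ν` and `β = μ`, giving `α! β!`, and `∏ ε(uₖ) = (-1)^{|α|}`.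
-/

open Equiv Finset Nat
open Fintype (card card_congr equivOfCardEq)

section PermutationsOntoFibers

variable {α ι : Type*} [Fintype α] [DecidableEq ι]

theorem card_fiber_comp_equiv {β : Type*} [Fintype β] (e : α ≃ β) (f : β → ι) (i : ι) :
    card {a // f (e a) = i} = card {b // f b = i} :=
  card_congr (e.subtypeEquiv fun _ => Iff.rfl)

theorem exists_perm_comp_eq_iff (f g : α → ι) :
    (∃ π : Perm α, g ∘ π = f) ↔ ∀ i, card {a // f a = i} = card {a // g a = i} := by
  constructor
  · rintro ⟨π, rfl⟩ i
    exact card_fiber_comp_equiv π g i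
  · intro h
    exact ⟨Equiv.ofFiberEquiv fun i => equivOfCardEq (h i), funext (ofFiberEquiv_map _)⟩

theorem card_perm_comp_eq [DecidableEq α] [Fintype ι] (f g : α → ι) :
    card {π : Perm α // g ∘ π = f} =
      if ∀ i, card {a // f a = i} = card {a // g a = i} then ∏ i, (card {a // f a = i})!
      else 0 := by
  split_ifs with h
  · obtain ⟨π₀, rfl⟩ := (exists_perm_comp_eq_iff f g).2 h
    rw [← DomMulAct.stabilizer_card]
    refine card_congr ((Equiv.mulLeft π₀⁻¹).subtypeEquiv fun π => ?_)
    rw [Equiv.coe_mulLeft, Perm.coe_mul, Function.comp_assoc g, ← Function.comp_assoc π₀,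
      ← Perm.coe_mul, mul_inv_cancel, Perm.coe_one, Function.id_comp]
  · exact Fintype.card_eq_zero_iff.2
      ⟨fun ⟨π, hπ⟩ => h ((exists_perm_comp_eq_iff f g).1 ⟨π, hπ⟩)⟩

theorem sum_perm_prod_ite_eq [DecidableEq α] {R : Type*} [CommSemiring R] (f g : α → ι)
    (c : α → R) :
    ∑ π : Perm α, ∏ a, (if g (π a) = f a then c a else 0) =
      card {π : Perm α // g ∘ π = f} * ∏ a, c a := by
  simp only [Fintype.prod_ite_zero, ← funext_iff, Function.comp_def]
  rw [sum_ite, sum_const_zero, add_zero, sum_const, nsmul_eq_mul, Fintype.card_subtype]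

theorem prod_comp_eq_prod_pow_card [Fintype ι] {M : Type*} [CommMonoid M] (f : α → ι)
    (c : ι → M) :
    ∏ a, c (f a) = ∏ i, c i ^ card {a // f a = i} := by
  rw [← prod_fiberwise univ f]
  refine Finset.prod_congr rfl fun i _ => ?_
  rw [Finset.prod_congr rfl fun a ha => by rw [(mem_filter.1 ha).2], prod_const,
    Fintype.card_subtype]

end PermutationsOntoFibers

section WeylMonomials

variable {n : ℕ}

def WGen.sign : WGen n → ℂ := Sum.elim (fun _ => -1) (fun _ => 1)

theorem omegaForm_eq_ite (a b : WGen n) : omegaForm a b = if b = a.swap then a.sign else 0 := by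
  rcases a with i | i <;> rcases b with j | j <;> simp [omegaForm, WGen.sign, eq_comm]

theorem kostant_of_length_eq {u v : List (WGen n)} (h : u.length = v.length) :
    kostant u v =
      card {π : Perm (Fin u.length) // (v.get ∘ finCongr h) ∘ π = Sum.swap ∘ u.get} *
        ∏ k, (u.get k).sign := by
  rw [kostant, dif_pos h, ← sum_perm_prod_ite_eq]
  simp only [omegaForm_eq_ite, Function.comp_apply]
  rfl

theorem card_get_eq_count {γ : Type*} [DecidableEq γ] (l : List γ) (c : γ) :
    card {k // l.get k = c} = Multiset.count c l := by
  have hl : (l : Multiset γ) = univ.val.map l.get := by rw [Fin.univ_val_map, List.ofFn_get]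
  rw [hl, Multiset.count_map, Fintype.card_subtype]
  simp [Finset.card_def, Finset.filter_val, eq_comm]

theorem card_get_monoList (α β : Fin n → ℕ) (a : WGen n) :
    card {k // (monoList α β).get k = a} = Sum.elim α β a := by
  rw [card_get_eq_count, monoList, ← Multiset.coe_add, Multiset.count_add]
  have hrange : (List.finRange n : Multiset (Fin n)) = univ.val := rfl
  simp only [← Multiset.coe_bind, hrange, Multiset.count_bind, Multiset.coe_replicate,
    Multiset.count_replicate, ← Finset.sum_eq_multiset_sum]
  rcases a with i | i <;> simp

theorem length_monoList (α β : Fin n → ℕ) :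
    (monoList α β).length = ∑ i, α i + ∑ i, β i := by
  simp [monoList, ← Fin.sum_univ_def]

theorem card_fiber_swap {γ : Type*} [Fintype γ] (f : γ → WGen n) (a : WGen n) :
    card {k // (f k).swap = a} = card {k // f k = a.swap} :=
  card_congr <| subtypeEquivRight fun _ =>
    ⟨fun h => by rw [← h, Sum.swap_swap], fun h => by rw [h, Sum.swap_swap]⟩

theorem prod_sign_pow_elim (α β : Fin n → ℕ) :
    ∏ a : WGen n, a.sign ^ Sum.elim α β a = (-1) ^ ∑ i, α i := by
  simp [Fintype.prod_sum_type, WGen.sign, prod_pow_eq_pow_sum]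

end WeylMonomials

/-- `κ(x^α y^β, x^μ y^ν) = (-1)^{|α|} δ_{α,ν} δ_{β,μ} α! β!`; in particular the monomial
basis `{x^α y^β}` is an orthogonal basis of the Weyl algebra for the Kostant pairing. -/
theorem stmt0 {n : ℕ} (α β μ ν : Fin n → ℕ) :
    kostant (monoList α β) (monoList μ ν) =
      (-1) ^ (∑ i, α i) * (if α = ν then 1 else 0) * (if β = μ then 1 else 0) *
        (∏ i, (Nat.factorial (α i) : ℂ)) * (∏ i, (Nat.factorial (β i) : ℂ)) := by
  by_cases h : (monoList α β).length = (monoList μ ν).length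
  · rw [kostant_of_length_eq h, card_perm_comp_eq,
      prod_comp_eq_prod_pow_card (monoList α β).get WGen.sign]
    simp only [Function.comp_apply, card_fiber_swap, card_fiber_comp_equiv (finCongr h),
      card_get_monoList, prod_sign_pow_elim]
    simp only [Sum.forall, Sum.swap_inl, Sum.swap_inr, Sum.elim_inl, Sum.elim_inr,
      Fintype.prod_sum_type]
    simp only [← funext_iff]
    by_cases hαν : α = ν <;> by_cases hβμ : β = μ <;> simp [hαν, hβμ]
    ring
  · have hne : ¬(α = ν ∧ β = μ) := by
      rintro ⟨rfl, rfl⟩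
      exact h (by rw [length_monoList, length_monoList, add_comm])
    rw [kostant, dif_neg h]
    rcases not_and_or.1 hne with hαν | hβμ <;> simp [*]
end

section
/- The assignment sending a non-crossing diagram D to its associated monomial m_D = x^{α(D)} y^{β(D)} in the Weyl algebra is injective: if D and D' are non-crossing diagrams with m_D = m_{D'}, then D = D'. -/
/-- Lexicographic (weak) order on chords `(i,j)`. -/
def chordLe (c d : ℕ × ℕ) : Prop := c.1 < d.1 ∨ (c.1 = d.1 ∧ c.2 ≤ d.2)

/-- A diagram `D` (a lexicographically weakly increasing list of chords) is non-crossing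
if every chord `(i,j)` satisfies `i < j` and whenever chords `c, c'` of `D` satisfy
`c.1 < c'.1 < c.2`, then `c'.2 ≤ c.2`. -/
def NonCrossing (D : List (ℕ × ℕ)) : Prop :=
  (∀ c ∈ D, c.1 < c.2) ∧ ∀ c ∈ D, ∀ c' ∈ D, c.1 < c'.1 → c'.1 < c.2 → c'.2 ≤ c.2

/-! In a non-crossing diagram the last initial vertex `i` and the first terminal vertex `j`
after it always form a chord `(i, j)`, and this chord is read off from the marginals `α`, `β`
alone. Removing it and inducting, the marginals determine the diagram up to order, and a
lexicographically sorted list is determined by its multiset of entries. -/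

instance : Std.Antisymm chordLe :=
  ⟨fun _ _ h h' => by unfold chordLe at h h'; ext <;> omega⟩

theorem List.Perm.map_erase {α β : Type*} [BEq α] [LawfulBEq α] {l l' : List α} {a : α}
    (f : α → β) (h : (l.map f).Perm (l'.map f)) (ha : a ∈ l) (ha' : a ∈ l') :
    ((l.erase a).map f).Perm ((l'.erase a).map f) :=
  (((perm_cons_erase ha).map f).symm.trans (h.trans ((perm_cons_erase ha').map f))).cons_inv

namespace NonCrossing

variable {D D' : List (ℕ × ℕ)}

theorem subset (hD : NonCrossing D) (h : D' ⊆ D) : NonCrossing D' :=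
  ⟨fun c hc => hD.1 c (h hc), fun c hc c' hc' => hD.2 c (h hc) c' (h hc')⟩

/-- A chord ending at `j` starts at `i`, or starts before `i` and then encloses the chords
starting at `i`, which forces them to end at `j`. -/
theorem mem_of_max_fst_of_min_snd (hD : NonCrossing D) {i j : ℕ}
    (hi : i ∈ D.map Prod.fst) (hj : j ∈ D.map Prod.snd) (hij : i < j)
    (hmax : ∀ q ∈ D.map Prod.fst, q ≤ i) (hmin : ∀ q ∈ D.map Prod.snd, i < q → j ≤ q) :
    (i, j) ∈ D := by
  obtain ⟨c, hc, rfl⟩ := List.mem_map.mp hi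
  obtain ⟨d, hd, rfl⟩ := List.mem_map.mp hj
  have hdc : d.1 ≤ c.1 := hmax d.1 (List.mem_map_of_mem hd)
  rcases hdc.eq_or_lt with heq | hlt
  · rwa [← heq, Prod.mk.eta]
  · have hcd : c.2 ≤ d.2 := hD.2 d hd c hc hlt hij
    have hdc' : d.2 ≤ c.2 := hmin c.2 (List.mem_map_of_mem hc) (hD.1 c hc)
    rwa [le_antisymm hdc' hcd, Prod.mk.eta]

theorem exists_mem_of_perm_map (hD : NonCrossing D) (hD' : NonCrossing D')
    (hA : (D.map Prod.fst).Perm (D'.map Prod.fst))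
    (hB : (D.map Prod.snd).Perm (D'.map Prod.snd))
    (hne : D ≠ []) : ∃ c ∈ D, c ∈ D' := by
  obtain ⟨c, hc, hcmax⟩ := D.toFinset.exists_max_image Prod.fst (by simpa using hne)
  simp only [List.mem_toFinset] at hc hcmax
  obtain ⟨d, hd, hdmin⟩ := (D.filter (fun e => c.1 < e.2)).toFinset.exists_min_image Prod.snd
    ⟨c, by simpa using ⟨hc, hD.1 c hc⟩⟩
  simp only [List.mem_toFinset, List.mem_filter, decide_eq_true_eq] at hd hdmin
  have hmem : ∀ E, NonCrossing E → (E.map Prod.fst).Perm (D.map Prod.fst) →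
      (E.map Prod.snd).Perm (D.map Prod.snd) → (c.1, d.2) ∈ E := by
    intro E hE hEA hEB
    refine hE.mem_of_max_fst_of_min_snd ?_ ?_ hd.2 ?_ ?_ <;>
      simp only [hEA.mem_iff, hEB.mem_iff, List.mem_map, forall_exists_index, and_imp,
        forall_apply_eq_imp_iff₂]
    exacts [⟨c, hc, rfl⟩, ⟨d, hd.1, rfl⟩, hcmax, fun e he hce => hdmin e ⟨he, hce⟩]
  exact ⟨_, hmem D hD (.refl _) (.refl _), hmem D' hD' hA.symm hB.symm⟩

theorem perm_of_perm_map (hD : NonCrossing D) (hD' : NonCrossing D')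
    (hA : (D.map Prod.fst).Perm (D'.map Prod.fst)) (hB : (D.map Prod.snd).Perm (D'.map Prod.snd)) :
    D.Perm D' := by
  induction hn : D.length generalizing D D' with
  | zero =>
    obtain rfl : D = [] := List.eq_nil_of_length_eq_zero hn
    rw [List.map_eq_nil_iff.mp (List.nil_perm.mp hA)]
  | succ n ih =>
    obtain ⟨c, hc, hc'⟩ :=
      exists_mem_of_perm_map hD hD' hA hB (List.ne_nil_of_length_eq_add_one hn)
    have hrest : (D.erase c).Perm (D'.erase c) :=
      ih (hD.subset List.erase_subset) (hD'.subset List.erase_subset) (hA.map_erase _ hc hc')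
        (hB.map_erase _ hc hc') (by simp [List.length_erase_of_mem hc, hn])
    exact (List.perm_cons_erase hc).trans ((hrest.cons c).trans (List.perm_cons_erase hc').symm)

end NonCrossing

/-- The map sending a non-crossing diagram `D` to its associated monomial
`m_D = x^{α(D)} y^{β(D)}`, where `α(D)_q` (resp. `β(D)_q`) is the number of chords of `D`
with initial (resp. terminal) vertex `q`, is injective. -/
theorem stmt3 (D D' : List (ℕ × ℕ))
    (hD : D.Pairwise chordLe) (hD' : D'.Pairwise chordLe)
    (hND : NonCrossing D) (hND' : NonCrossing D')
    (hα : ∀ q, (D.map Prod.fst).count q = (D'.map Prod.fst).count q)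
    (hβ : ∀ q, (D.map Prod.snd).count q = (D'.map Prod.snd).count q) :
    D = D' :=
  (hND.perm_of_perm_map hND' (List.perm_iff_count.mpr hα)
    (List.perm_iff_count.mpr hβ)).eq_of_pairwise' hD hD'
end

section
/- In the Clifford algebra on n generators with e_i e_j + e_j e_i = 2 δ_{ij}, for a strictly increasing sequence A = (a_1,…,a_k) and indices a_p, a_q ∈ A with p < q, one has e_{A∖{a_p,a_q}} e_A = (-1)^{k(k-1)/2} (-1)^{p+q} e_{a_p} e_{a_q}. -/
/-- Ordered product `e_A = e_{a₁} ⋯ e_{a_k}` of Clifford generators. -/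
def eProd {R : Type} [Ring R] {n k : ℕ} (e : Fin n → R) (a : Fin k → Fin n) : R :=
  (List.ofFn fun i => e (a i)).prod

/-- Ordered product `e_{A∖{a_p,a_q}}` of the Clifford generators of `A` with the
`p`-th and `q`-th entries removed. -/
def eDel {R : Type} [Ring R] {n k : ℕ} (e : Fin n → R) (a : Fin k → Fin n)
    (p q : Fin k) : R :=
  (((List.finRange k).filter fun i => i ≠ p ∧ i ≠ q).map fun i => e (a i)).prod

/-!
Put `f i = e (a i)`: the `f i` square to `1` and, `a` being injective, pairwise anticommute.
Split `A` as `A₁ a_p A₂ a_q A₃` and let `D = A₁ A₂ A₃`. Moving `e_{a_q}` left across the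
`q - p - 1` factors of `A₂`, and then the pair `e_{a_p} e_{a_q}` (which commutes with every
`f i`, `i ≠ p, q`) across `A₁`, gives `e_A = (-1)^(q-p-1) e_{a_p} e_{a_q} e_D`. Hence
`e_D e_A = (-1)^(q-p-1) e_{a_p} e_{a_q} e_D²`, and `e_D² = (-1)^C(k-2,2)` because reversing a word
of `m` anticommuting generators costs `C(m,2)` transpositions. Finally
`C(k,2) = C(k-2,2) + 2k - 3`, so the two signs agree.
-/

theorem List.exists_eq_append_cons_append_cons {α : Type*} (l : List α) {i j : ℕ} (hij : i < j)
    (hj : j < l.length) :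
    ∃ A B C, l = A ++ l[i] :: B ++ l[j] :: C ∧ B.length = j - i - 1 := by
  refine ⟨l.take i, (l.drop (i + 1)).take (j - i - 1), l.drop (j + 1), ?_, by
    simp only [List.length_take, List.length_drop]; omega⟩
  have hdrop : (l.drop (i + 1)).drop (j - i - 1) = l[j] :: l.drop (j + 1) := by
    rw [List.drop_drop, List.getElem_cons_drop]
    congr 1
    omega
  conv_lhs => rw [← List.take_append_drop i l, ← List.getElem_cons_drop (by omega),
    ← List.take_append_drop (j - i - 1) (l.drop (i + 1)), hdrop]
  simp

theorem List.Nodup.filter_ne_and_ne {α : Type*} [DecidableEq α] {A B C : List α} {x y : α}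
    (h : (A ++ x :: B ++ y :: C).Nodup) :
    (A ++ x :: B ++ y :: C).filter (fun z => z ≠ x ∧ z ≠ y) = A ++ B ++ C := by
  rw [List.nodup_middle, List.nodup_cons, List.append_assoc, List.cons_append, List.nodup_middle,
    List.nodup_cons] at h
  obtain ⟨hy, hx, -⟩ := h
  have hkeep : ∀ l ⊆ A ++ B ++ C, l.filter (fun z => z ≠ x ∧ z ≠ y) = l := fun l hl =>
    List.filter_eq_self.2 fun z hz => by
      have hz' := hl hz
      simp only [List.mem_append, List.mem_cons] at hx hy hz'
      simp only [ne_eq, decide_eq_true_eq]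
      constructor <;> rintro rfl <;> tauto
  rw [List.filter_append, List.filter_append, List.filter_cons_of_neg (by simp),
    List.filter_cons_of_neg (by simp), hkeep A (by simp), hkeep B (by simp), hkeep C (by simp)]

section Ring

variable {R : Type*} [Ring R]

def Anticommute (a b : R) : Prop :=
  a * b = -(b * a)

theorem Anticommute.symm {a b : R} (h : Anticommute a b) : Anticommute b a := by
  rw [Anticommute, h, neg_neg]

theorem neg_one_pow_mul_comm (n : ℕ) (x : R) : x * (-1) ^ n = (-1) ^ n * x :=
  ((Commute.neg_one_left x).pow_left n).eq.symm

theorem List.prod_mul_of_forall_anticommute {x : R} {l : List R}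
    (h : ∀ y ∈ l, Anticommute y x) : l.prod * x = (-1) ^ l.length * (x * l.prod) := by
  induction l with
  | nil => simp
  | cons y t ih =>
    rw [List.forall_mem_cons] at h
    calc (y :: t).prod * x = y * (t.prod * x) := by rw [List.prod_cons, mul_assoc]
      _ = (-1) ^ t.length * (y * x * t.prod) := by
        rw [ih h.2, ← mul_assoc, neg_one_pow_mul_comm, mul_assoc, mul_assoc]
      _ = (-1) ^ (y :: t).length * (x * (y :: t).prod) := by
        rw [h.1, List.length_cons, List.prod_cons, pow_succ]
        noncomm_ring

theorem List.commute_prod_mul_of_forall_anticommute {x y : R} {l : List R}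
    (hx : ∀ z ∈ l, Anticommute z x) (hy : ∀ z ∈ l, Anticommute z y) :
    Commute l.prod (x * y) :=
  calc l.prod * (x * y) = (-1) ^ l.length * (x * (l.prod * y)) := by
        rw [← mul_assoc, List.prod_mul_of_forall_anticommute hx, mul_assoc, mul_assoc]
    _ = ((-1) ^ l.length * (-1) ^ l.length) * (x * (y * l.prod)) := by
        rw [List.prod_mul_of_forall_anticommute hy, ← mul_assoc x, neg_one_pow_mul_comm]
        simp only [mul_assoc]
    _ = x * y * l.prod := by
        rw [← pow_add, ← two_mul, pow_mul, neg_one_sq, one_pow, one_mul, mul_assoc]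

theorem List.prod_mul_self_of_pairwise_anticommute {l : List R} (hsq : ∀ x ∈ l, x * x = 1)
    (hl : l.Pairwise Anticommute) : l.prod * l.prod = (-1) ^ l.length.choose 2 := by
  induction l with
  | nil => simp
  | cons x t ih =>
    rw [List.forall_mem_cons] at hsq
    rw [List.pairwise_cons] at hl
    calc (x :: t).prod * (x :: t).prod = x * (t.prod * x) * t.prod := by
          simp only [List.prod_cons, mul_assoc]
      _ = (-1) ^ t.length * (x * x * (t.prod * t.prod)) := by
        rw [List.prod_mul_of_forall_anticommute fun y hy => (hl.1 y hy).symm, ← mul_assoc,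
          neg_one_pow_mul_comm]
        simp only [mul_assoc]
      _ = (-1) ^ (x :: t).length.choose 2 := by
        rw [hsq.1, one_mul, ih hsq.2 hl.2, ← pow_add, List.length_cons, Nat.choose_succ_succ',
          Nat.choose_one_right, add_comm]

theorem List.prod_mul_prod_of_pairwise_anticommute {A B C : List R} {x y : R}
    (hsq : ∀ z ∈ A ++ B ++ C, z * z = 1) (hl : (A ++ x :: B ++ y :: C).Pairwise Anticommute) :
    (A ++ B ++ C).prod * (A ++ x :: B ++ y :: C).prod =
      (-1) ^ (B.length + (A ++ B ++ C).length.choose 2) * (x * y) := by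
  rw [List.pairwise_middle Anticommute.symm, List.pairwise_cons, List.append_assoc,
    List.cons_append, List.pairwise_middle Anticommute.symm, List.pairwise_cons,
    ← List.append_assoc] at hl
  obtain ⟨hy, hx, hD⟩ := hl
  have hyD : ∀ z ∈ A ++ B ++ C, Anticommute z y := fun z hz => by
    refine (hy z ?_).symm
    simp only [List.mem_append, List.mem_cons] at hz ⊢
    tauto
  have hxy : ∀ D ⊆ A ++ B ++ C, Commute D.prod (x * y) := fun D hD =>
    List.commute_prod_mul_of_forall_anticommute (fun z hz => (hx z (hD hz)).symm)
      (fun z hz => hyD z (hD hz))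
  have hprod : (A ++ x :: B ++ y :: C).prod = (-1) ^ B.length * (x * y * (A ++ B ++ C).prod) :=
    calc (A ++ x :: B ++ y :: C).prod = A.prod * (x * (B.prod * y * C.prod)) := by
          simp only [List.prod_append, List.prod_cons, mul_assoc]
      _ = (-1) ^ B.length * (A.prod * (x * y) * (B.prod * C.prod)) := by
          rw [List.prod_mul_of_forall_anticommute fun z hz => hyD z (by simp [hz])]
          simp only [mul_assoc, ← neg_one_pow_mul_comm B.length]
      _ = (-1) ^ B.length * (x * y * (A ++ B ++ C).prod) := by
          rw [(hxy A (by simp)).eq]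
          simp only [List.prod_append, mul_assoc]
  calc (A ++ B ++ C).prod * (A ++ x :: B ++ y :: C).prod
      = (-1) ^ B.length * ((A ++ B ++ C).prod * (x * y) * (A ++ B ++ C).prod) := by
        rw [hprod, ← mul_assoc, neg_one_pow_mul_comm]
        simp only [mul_assoc]
    _ = (-1) ^ B.length * (x * y * ((A ++ B ++ C).prod * (A ++ B ++ C).prod)) := by
        rw [(hxy _ (List.Subset.refl _)).eq, mul_assoc]
    _ = (-1) ^ (B.length + (A ++ B ++ C).length.choose 2) * (x * y) := by
        rw [List.prod_mul_self_of_pairwise_anticommute hsq hD, neg_one_pow_mul_comm, pow_add,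
          mul_assoc]

theorem eq_one_of_add_self_eq_two {x : R} (h2 : IsUnit (2 : R)) (h : x + x = 2) : x = 1 :=
  h2.mul_left_cancel (by rw [two_mul, h, mul_one])

theorem neg_one_pow_sub_add_choose_sub_two {k p q : ℕ} (hk : 2 ≤ k) (hpq : p < q) :
    (-1 : R) ^ (q - p - 1 + (k - 2).choose 2) = (-1) ^ (k * (k - 1) / 2) * (-1) ^ (p + q) := by
  obtain ⟨m, rfl⟩ := Nat.exists_eq_add_of_le' hk
  have hchoose : (m + 2).choose 2 = m.choose 2 + 2 * m + 1 := by
    rw [Nat.choose_succ_succ' (m + 1) 1, Nat.choose_succ_succ' m 1, Nat.choose_one_right,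
      Nat.choose_one_right]
    ring
  have hexp : (m + 2).choose 2 + (p + q) = q - p - 1 + m.choose 2 + 2 * (m + p + 1) := by
    omega
  rw [Nat.add_sub_cancel, ← Nat.choose_two_right, ← pow_add, hexp, pow_add _ _ (2 * _), pow_mul,
    neg_one_sq, one_pow, mul_one]

end Ring

/-- For a strictly increasing sequence `A = (a₁,…,a_k)` and positions `p < q`,
`e_{A∖{a_p,a_q}} e_A = (-1)^{k(k-1)/2} (-1)^{p+q} e_{a_p} e_{a_q}` in the Clifford algebra. -/
theorem stmt5 {R : Type} [Ring R] [Algebra ℂ R] {n k : ℕ} (e : Fin n → R)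
    (he : ∀ i j, e i * e j + e j * e i = if i = j then 2 else 0)
    (a : Fin k → Fin n) (ha : StrictMono a) (p q : Fin k) (hpq : p < q) :
    eDel e a p q * eProd e a =
      (-1 : R) ^ (k * (k - 1) / 2) * (-1 : R) ^ (p.val + q.val) * (e (a p) * e (a q)) := by
  have h2 : IsUnit (2 : R) := by
    simpa only [map_ofNat] using (IsUnit.mk0 (2 : ℂ) two_ne_zero).map (algebraMap ℂ R)
  set f : Fin k → R := fun i => e (a i)
  have hsq (i : Fin k) : f i * f i = 1 :=
    eq_one_of_add_self_eq_two h2 (by simpa using he (a i) (a i))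
  have hanti : Pairwise fun i j => Anticommute (f i) (f j) := fun i j hij =>
    eq_neg_of_add_eq_zero_left (by simpa [ha.injective.ne hij] using he (a i) (a j))
  obtain ⟨A, B, C, hL, hB⟩ :=
    (List.finRange k).exists_eq_append_cons_append_cons (i := p) (j := q) hpq (by simp)
  simp only [List.getElem_finRange, Fin.cast_mk, Fin.eta] at hL
  have hnd : (A ++ p :: B ++ q :: C).Nodup := hL ▸ List.nodup_finRange k
  have hlen : (A ++ B ++ C).length = k - 2 := by
    have := congrArg List.length hL
    simp only [List.length_finRange, List.length_append, List.length_cons] at this ⊢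
    omega
  have hdel : eDel e a p q = ((A ++ B ++ C).map f).prod := by
    rw [eDel, hL, hnd.filter_ne_and_ne]
  have hprod : eProd e a = ((A ++ p :: B ++ q :: C).map f).prod := by
    rw [eProd, List.ofFn_eq_map, hL]
  have hpair := List.pairwise_map.2 (hnd.imp fun h => hanti h)
  have hsqD : ∀ z ∈ (A ++ B ++ C).map f, z * z = 1 := List.forall_mem_map.2 fun i _ => hsq i
  rw [hdel, hprod]
  simp only [List.map_append, List.map_cons] at hpair hsqD ⊢
  rw [List.prod_mul_prod_of_pairwise_anticommute hsqD hpair]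
  have hpq' : p.val < q.val := hpq
  rw [← List.map_append, ← List.map_append, List.length_map, List.length_map, hB, hlen,
    neg_one_pow_sub_add_choose_sub_two (by omega) hpq']
end

section
/- In the Weyl-Clifford algebra WC = W ⊗ C, the elements O_{ij} := L_{ij} ⊗ 1 + (1/2)(1 ⊗ e_i e_j), for 1 ≤ i < j ≤ n, span a Lie subalgebra isomorphic to so(n, ℂ) under the commutator; explicitly, extending the definition by O_{ji} = -O_{ij}, O_{ii} = 0, one has [O_{ij}, O_{kl}] = δ_{jk} O_{il} - δ_{ik} O_{jl} - δ_{jl} O_{ik} + δ_{il} O_{jk}. -/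
open scoped BigOperators

/-- The 2-index symmetry `O_{ij} = L_{ij} + (1/2) eᵢ eⱼ` of the Weyl-Clifford algebra,
extended antisymmetrically in the indices (so `O_{ji} = -O_{ij}` and `O_{ii} = 0`). -/
noncomputable def Osym {R : Type} [Ring R] [Algebra ℂ R] {n : ℕ}
    (x y e : Fin n → R) (i j : Fin n) : R :=
  if i = j then 0 else (x i * y j - x j * y i) + ((1 : ℂ) / 2) • (e i * e j)

/-- Auxiliary: the Weyl part `L_{ab} = x_a y_b - x_b y_a`. -/
def Lop {R : Type} [Ring R] {n : ℕ} (x y : Fin n → R) (a b : Fin n) : R :=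
  x a * y b - x b * y a

/-- Auxiliary: the (shifted) Clifford part `E_{ab} = e_a e_b - δ_{ab}`. -/
def Eop {R : Type} [Ring R] {n : ℕ} (e : Fin n → R) (a b : Fin n) : R :=
  e a * e b - (if a = b then 1 else 0)

section Aux
variable {R : Type} [Ring R] {n : ℕ} (x y e : Fin n → R)

lemma aux_pairXY
    (hyx : ∀ i j, y i * x j - x j * y i = if i = j then 1 else 0)
    (hxx : ∀ i j, x i * x j = x j * x i)
    (hyy : ∀ i j, y i * y j = y j * y i)
    (a b p q : Fin n) :
    (x a * y b) * (x p * y q) - (x p * y q) * (x a * y b) =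
      (if b = p then x a * y q else 0) - (if a = q then x p * y b else 0) := by
  have e1 : y b * x p = (if b = p then (1:R) else 0) + x p * y b :=
    sub_eq_iff_eq_add.mp (hyx b p)
  have e3 : (if q = a then (1:R) else 0) = (if a = q then 1 else 0) := by simp [eq_comm]
  have e2 : y q * x a = (if a = q then (1:R) else 0) + x a * y q := by
    rw [← e3]; exact sub_eq_iff_eq_add.mp (hyx q a)
  calc (x a * y b) * (x p * y q) - (x p * y q) * (x a * y b)
      = x a * (y b * x p) * y q - x p * (y q * x a) * y b := by noncomm_ring
    _ = x a * ((if b = p then (1:R) else 0) + x p * y b) * y q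
        - x p * ((if a = q then (1:R) else 0) + x a * y q) * y b := by rw [e1, e2]
    _ = (if b = p then x a * y q else 0) - (if a = q then x p * y b else 0)
        + ((x a * x p) * (y b * y q) - (x p * x a) * (y q * y b)) := by
        split_ifs <;> noncomm_ring
    _ = (if b = p then x a * y q else 0) - (if a = q then x p * y b else 0) := by
        rw [hxx a p, hyy q b]; noncomm_ring

lemma aux_LL
    (hyx : ∀ i j, y i * x j - x j * y i = if i = j then 1 else 0)
    (hxx : ∀ i j, x i * x j = x j * x i)
    (hyy : ∀ i j, y i * y j = y j * y i)
    (a b p q : Fin n) :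
    Lop x y a b * Lop x y p q - Lop x y p q * Lop x y a b =
      (if b = p then Lop x y a q else 0) - (if a = p then Lop x y b q else 0)
      - (if b = q then Lop x y a p else 0) + (if a = q then Lop x y b p else 0) := by
  have h1 := aux_pairXY x y hyx hxx hyy a b p q
  have h2 := aux_pairXY x y hyx hxx hyy a b q p
  have h3 := aux_pairXY x y hyx hxx hyy b a p q
  have h4 := aux_pairXY x y hyx hxx hyy b a q p
  have expand : Lop x y a b * Lop x y p q - Lop x y p q * Lop x y a b =
      ((x a * y b) * (x p * y q) - (x p * y q) * (x a * y b))
      - ((x a * y b) * (x q * y p) - (x q * y p) * (x a * y b))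
      - ((x b * y a) * (x p * y q) - (x p * y q) * (x b * y a))
      + ((x b * y a) * (x q * y p) - (x q * y p) * (x b * y a)) := by
    simp only [Lop]; noncomm_ring
  rw [expand, h1, h2, h3, h4]
  simp only [Lop]
  split_ifs <;> noncomm_ring

lemma aux_EEraw
    (he : ∀ i j, e i * e j + e j * e i = if i = j then 2 else 0)
    (a b p q : Fin n) :
    (e a * e b) * (e p * e q) - (e p * e q) * (e a * e b) =
      2 * ((if b = p then e a * e q else 0) - (if b = q then e a * e p else 0)
        + (if a = p then e q * e b else 0) - (if a = q then e p * e b else 0)) := by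
  have key : (e a * e b) * (e p * e q) - (e p * e q) * (e a * e b)
      = e a * (e b * e p + e p * e b) * e q - (e a * e p) * (e b * e q + e q * e b)
        + (e a * e p + e p * e a) * (e q * e b) - e p * (e a * e q + e q * e a) * e b := by
    noncomm_ring
  rw [key, he b p, he b q, he a p, he a q]
  split_ifs <;> noncomm_ring

lemma aux_EE
    (he : ∀ i j, e i * e j + e j * e i = if i = j then 2 else 0)
    (a b p q : Fin n) :
    Eop e a b * Eop e p q - Eop e p q * Eop e a b =
      2 * ((if b = p then Eop e a q else 0) - (if a = p then Eop e b q else 0)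
        - (if b = q then Eop e a p else 0) + (if a = q then Eop e b p else 0)) := by
  have e5 : e q * e b = (if b = q then (2:R) else 0) - e b * e q := by
    rw [← he b q]; noncomm_ring
  have e6 : e p * e b = (if b = p then (2:R) else 0) - e b * e p := by
    rw [← he b p]; noncomm_ring
  calc Eop e a b * Eop e p q - Eop e p q * Eop e a b
      = (e a * e b) * (e p * e q) - (e p * e q) * (e a * e b) := by
        simp only [Eop]; split_ifs <;> noncomm_ring
    _ = 2 * ((if b = p then e a * e q else 0) - (if b = q then e a * e p else 0)
        + (if a = p then e q * e b else 0) - (if a = q then e p * e b else 0)) :=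
        aux_EEraw e he a b p q
    _ = 2 * ((if b = p then Eop e a q else 0) - (if a = p then Eop e b q else 0)
        - (if b = q then Eop e a p else 0) + (if a = q then Eop e b p else 0)) := by
        rw [e5, e6]; simp only [Eop]; split_ifs
        all_goals rw [show (2:R) = 1 + 1 by norm_num]
        all_goals noncomm_ring

lemma aux_xyComm
    (hxe : ∀ i j, x i * e j = e j * x i)
    (hye : ∀ i j, y i * e j = e j * y i)
    (a b p q : Fin n) :
    (x a * y b) * (e p * e q) = (e p * e q) * (x a * y b) := by
  calc (x a * y b) * (e p * e q) = x a * (y b * e p) * e q := by noncomm_ring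
    _ = x a * (e p * y b) * e q := by rw [hye b p]
    _ = (x a * e p) * (y b * e q) := by noncomm_ring
    _ = (e p * x a) * (e q * y b) := by rw [hxe a p, hye b q]
    _ = e p * (x a * e q) * y b := by noncomm_ring
    _ = e p * (e q * x a) * y b := by rw [hxe a q]
    _ = (e p * e q) * (x a * y b) := by noncomm_ring

lemma aux_LE
    (hxe : ∀ i j, x i * e j = e j * x i)
    (hye : ∀ i j, y i * e j = e j * y i)
    (a b p q : Fin n) :
    Lop x y a b * Eop e p q = Eop e p q * Lop x y a b := by
  have h1 := aux_xyComm x y e hxe hye a b p q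
  have h2 := aux_xyComm x y e hxe hye b a p q
  simp only [Lop, Eop]
  split_ifs
  · calc (x a * y b - x b * y a) * (e p * e q - 1)
        = (x a * y b) * (e p * e q) - (x b * y a) * (e p * e q)
          - (x a * y b - x b * y a) := by noncomm_ring
      _ = (e p * e q) * (x a * y b) - (e p * e q) * (x b * y a)
          - (x a * y b - x b * y a) := by rw [h1, h2]
      _ = (e p * e q - 1) * (x a * y b - x b * y a) := by noncomm_ring
  · calc (x a * y b - x b * y a) * (e p * e q - 0)
        = (x a * y b) * (e p * e q) - (x b * y a) * (e p * e q) := by noncomm_ring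
      _ = (e p * e q) * (x a * y b) - (e p * e q) * (x b * y a) := by rw [h1, h2]
      _ = (e p * e q - 0) * (x a * y b - x b * y a) := by noncomm_ring

end Aux

/-- In the Weyl-Clifford algebra `WC = W ⊗ C` (modeled as a `ℂ`-algebra containing
commuting copies of the Weyl and Clifford algebras), the 2-index symmetries
`O_{ij} = L_{ij} + (1/2) eᵢeⱼ` span a Lie algebra isomorphic to `so(n,ℂ)`; explicitly
`[O_{ij}, O_{kl}] = δ_{jk} O_{il} - δ_{ik} O_{jl} - δ_{jl} O_{ik} + δ_{il} O_{jk}`. -/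
theorem stmt8 {R : Type} [Ring R] [Algebra ℂ R] {n : ℕ} (x y e : Fin n → R)
    (hyx : ∀ i j, y i * x j - x j * y i = if i = j then 1 else 0)
    (hxx : ∀ i j, x i * x j = x j * x i)
    (hyy : ∀ i j, y i * y j = y j * y i)
    (he : ∀ i j, e i * e j + e j * e i = if i = j then 2 else 0)
    (hxe : ∀ i j, x i * e j = e j * x i)
    (hye : ∀ i j, y i * e j = e j * y i)
    (i j k l : Fin n) :
    Osym x y e i j * Osym x y e k l - Osym x y e k l * Osym x y e i j =
      (if j = k then Osym x y e i l else 0) - (if i = k then Osym x y e j l else 0) -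
        (if j = l then Osym x y e i k else 0) + (if i = l then Osym x y e j k else 0) := by

  set c : R := algebraMap ℂ R ((1:ℂ)/2) with hc_def
  -- c is central
  have hc : ∀ z : R, z * c = c * z := fun z => (Algebra.commutes _ z).symm
  -- basic scalar facts
  have h2alg : (2:R) = algebraMap ℂ R 2 := (map_ofNat (algebraMap ℂ R) 2).symm
  have hc2 : c * 2 = 1 := by
    rw [h2alg, hc_def, ← map_mul]; norm_num
  have hcc2 : c * c * 2 = c := by
    rw [h2alg, hc_def, ← map_mul, ← map_mul]; norm_num
  -- e a squares to one
  have hone : ∀ a, e a * e a = 1 := by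
    intro a
    have h := he a a
    rw [if_pos rfl] at h
    calc e a * e a = 1 * (e a * e a) := (one_mul _).symm
      _ = (c * 2) * (e a * e a) := by rw [hc2]
      _ = c * (e a * e a + e a * e a) := by noncomm_ring
      _ = c * 2 := by rw [h]
      _ = 1 := hc2
  -- rewrite Osym in terms of Lop and Eop
  have hO : ∀ a b, Osym x y e a b = Lop x y a b + c * Eop e a b := by
    intro a b
    unfold Osym
    split_ifs with h
    · subst h
      simp [Lop, Eop, hone a]
    · simp only [Lop, Eop, if_neg h, sub_zero, Algebra.smul_def, hc_def]
  simp only [hO]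
  -- commutator lemmas for the parts
  have hLLc := aux_LL x y hyx hxx hyy i j k l
  have hEEc := aux_EE e he i j k l
  have hLE1 := aux_LE x y e hxe hye i j k l
  have hLE2 := aux_LE x y e hxe hye k l i j
  -- expand the commutator of M = L + c E
  have key : (Lop x y i j + c * Eop e i j) * (Lop x y k l + c * Eop e k l)
      - (Lop x y k l + c * Eop e k l) * (Lop x y i j + c * Eop e i j)
      = (Lop x y i j * Lop x y k l - Lop x y k l * Lop x y i j)
        + c * (Lop x y i j * Eop e k l - Eop e k l * Lop x y i j)
        + c * (Eop e i j * Lop x y k l - Lop x y k l * Eop e i j)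
        + c * c * (Eop e i j * Eop e k l - Eop e k l * Eop e i j) := by
    have a1 : Lop x y i j * (c * Eop e k l) = c * (Lop x y i j * Eop e k l) := by
      rw [← mul_assoc, hc (Lop x y i j), mul_assoc]
    have a2 : (c * Eop e k l) * Lop x y i j = c * (Eop e k l * Lop x y i j) := by
      rw [mul_assoc]
    have a3 : Lop x y k l * (c * Eop e i j) = c * (Lop x y k l * Eop e i j) := by
      rw [← mul_assoc, hc (Lop x y k l), mul_assoc]
    have a4 : (c * Eop e i j) * Lop x y k l = c * (Eop e i j * Lop x y k l) := by
      rw [mul_assoc]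
    have a5 : (c * Eop e i j) * (c * Eop e k l) = c * c * (Eop e i j * Eop e k l) := by
      rw [mul_assoc, ← mul_assoc (Eop e i j), hc (Eop e i j), mul_assoc, ← mul_assoc,
        ← mul_assoc]
    have a6 : (c * Eop e k l) * (c * Eop e i j) = c * c * (Eop e k l * Eop e i j) := by
      rw [mul_assoc, ← mul_assoc (Eop e k l), hc (Eop e k l), mul_assoc, ← mul_assoc,
        ← mul_assoc]
    calc (Lop x y i j + c * Eop e i j) * (Lop x y k l + c * Eop e k l)
        - (Lop x y k l + c * Eop e k l) * (Lop x y i j + c * Eop e i j)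
        = (Lop x y i j * Lop x y k l - Lop x y k l * Lop x y i j)
          + (Lop x y i j * (c * Eop e k l) - (c * Eop e k l) * Lop x y i j)
          + ((c * Eop e i j) * Lop x y k l - Lop x y k l * (c * Eop e i j))
          + ((c * Eop e i j) * (c * Eop e k l) - (c * Eop e k l) * (c * Eop e i j)) := by
          noncomm_ring
      _ = (Lop x y i j * Lop x y k l - Lop x y k l * Lop x y i j)
          + c * (Lop x y i j * Eop e k l - Eop e k l * Lop x y i j)
          + c * (Eop e i j * Lop x y k l - Lop x y k l * Eop e i j)
          + c * c * (Eop e i j * Eop e k l - Eop e k l * Eop e i j) := by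
          rw [a1, a2, a3, a4, a5, a6]; noncomm_ring
  rw [key, hLLc, hEEc, hLE1]
  rw [show Eop e i j * Lop x y k l = Lop x y k l * Eop e i j from hLE2.symm]
  -- simplify the two vanishing cross terms and use c*c*2 = c
  have hccfin : ∀ Z : R, c * c * (2 * Z) = c * Z := by
    intro Z
    rw [← mul_assoc (c * c) 2 Z, hcc2]
  rw [hccfin]
  split_ifs <;> noncomm_ring
end

section
/- For n = 5, a diagram on 5 vertices with chord multiplicities m_{ij} is uncrossable (i.e., either it has no crossing, or removing a single chord yields a diagram with no crossing) if and only if the number of internal chords with positive multiplicity is at most 3, and whenever m_{i,i+2} ≥ 2 then m_{i+1,i+3} + m_{i+1,i+4} ≤ 1 (indices modulo 5). -/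
set_option maxHeartbeats 1000000

/-- A diagram on 5 vertices (given by chord multiplicities `m`) is crossed if there are
`i < j < k < l` with `m i k ≥ 1` and `m j l ≥ 1`. -/
def Crossed (m : Fin 5 → Fin 5 → ℕ) : Prop :=
  ∃ i j k l : Fin 5, i < j ∧ j < k ∧ k < l ∧ 1 ≤ m i k ∧ 1 ≤ m j l

/-- An uncrossed diagram has no crossing. -/
def Uncrossed (m : Fin 5 → Fin 5 → ℕ) : Prop := ¬ Crossed m

/-- The diagram obtained by decreasing the multiplicity of the chord `{i,j}` by one. -/
def removeChord (m : Fin 5 → Fin 5 → ℕ) (i j : Fin 5) : Fin 5 → Fin 5 → ℕ :=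
  fun a b => if (a = i ∧ b = j) ∨ (a = j ∧ b = i) then m i j - 1 else m a b

/-- A diagram is uncrossable if it is uncrossed, or removing a single chord yields an
uncrossed diagram. -/
def Uncrossable (m : Fin 5 → Fin 5 → ℕ) : Prop :=
  Uncrossed m ∨ ∃ i j : Fin 5, i < j ∧ 1 ≤ m i j ∧ Uncrossed (removeChord m i j)

/-- The five internal chords (diagonals `(i, i+2 mod 5)`) of the pentagon, written with
increasing endpoints. -/
def internalChords : Finset (Fin 5 × Fin 5) := {(0, 2), (1, 3), (2, 4), (0, 3), (1, 4)}

lemma crossed_iff' (m : Fin 5 → Fin 5 → ℕ) : Crossed m ↔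
    (1 ≤ m 0 2 ∧ 1 ≤ m 1 3) ∨ (1 ≤ m 0 2 ∧ 1 ≤ m 1 4) ∨ (1 ≤ m 0 3 ∧ 1 ≤ m 1 4) ∨
    (1 ≤ m 0 3 ∧ 1 ≤ m 2 4) ∨ (1 ≤ m 1 3 ∧ 1 ≤ m 2 4) := by
  constructor
  · rintro ⟨i, j, k, l, h1, h2, h3, h4, h5⟩
    fin_cases i <;> fin_cases j <;> fin_cases k <;> fin_cases l <;> simp_all
  · rintro (⟨h1, h2⟩ | ⟨h1, h2⟩ | ⟨h1, h2⟩ | ⟨h1, h2⟩ | ⟨h1, h2⟩)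
    · exact ⟨0, 1, 2, 3, by decide, by decide, by decide, h1, h2⟩
    · exact ⟨0, 1, 2, 4, by decide, by decide, by decide, h1, h2⟩
    · exact ⟨0, 1, 3, 4, by decide, by decide, by decide, h1, h2⟩
    · exact ⟨0, 2, 3, 4, by decide, by decide, by decide, h1, h2⟩
    · exact ⟨1, 2, 3, 4, by decide, by decide, by decide, h1, h2⟩

/-- no-crossing formula -/
def NC' (A B C D E : ℕ) : Prop :=
  ¬((1 ≤ A ∧ 1 ≤ B) ∨ (1 ≤ A ∧ 1 ≤ E) ∨ (1 ≤ D ∧ 1 ≤ E) ∨ (1 ≤ D ∧ 1 ≤ C) ∨ (1 ≤ B ∧ 1 ≤ C))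

lemma uncrossed_iff' (m : Fin 5 → Fin 5 → ℕ) :
    Uncrossed m ↔ NC' (m 0 2) (m 1 3) (m 2 4) (m 0 3) (m 1 4) := by
  rw [Uncrossed, crossed_iff', NC']

lemma uncrossable_iff' (m : Fin 5 → Fin 5 → ℕ) :
    Uncrossable m ↔ NC' (m 0 2) (m 1 3) (m 2 4) (m 0 3) (m 1 4) ∨
      (1 ≤ m 0 2 ∧ NC' (m 0 2 - 1) (m 1 3) (m 2 4) (m 0 3) (m 1 4)) ∨
      (1 ≤ m 1 3 ∧ NC' (m 0 2) (m 1 3 - 1) (m 2 4) (m 0 3) (m 1 4)) ∨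
      (1 ≤ m 2 4 ∧ NC' (m 0 2) (m 1 3) (m 2 4 - 1) (m 0 3) (m 1 4)) ∨
      (1 ≤ m 0 3 ∧ NC' (m 0 2) (m 1 3) (m 2 4) (m 0 3 - 1) (m 1 4)) ∨
      (1 ≤ m 1 4 ∧ NC' (m 0 2) (m 1 3) (m 2 4) (m 0 3) (m 1 4 - 1)) := by
  constructor
  · rintro (h | ⟨i, j, hij, hm, hun⟩)
    · exact Or.inl ((uncrossed_iff' m).mp h)
    · rw [uncrossed_iff'] at hun
      simp only [NC'] at hun ⊢
      fin_cases i <;> fin_cases j <;>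
        simp only [removeChord, Fin.isValue, Fin.reduceEq, and_true, true_and, and_false,
          false_and, or_false, false_or, or_self, if_true, if_false, ite_true, ite_false,
          and_self] at hun <;>
        simp_all
  · rintro (h | ⟨h1, h2⟩ | ⟨h1, h2⟩ | ⟨h1, h2⟩ | ⟨h1, h2⟩ | ⟨h1, h2⟩)
    · exact Or.inl ((uncrossed_iff' m).mpr h)
    · exact Or.inr ⟨0, 2, by decide, h1, by rw [uncrossed_iff']; simpa [removeChord, NC'] using h2⟩
    · exact Or.inr ⟨1, 3, by decide, h1, by rw [uncrossed_iff']; simpa [removeChord, NC'] using h2⟩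
    · exact Or.inr ⟨2, 4, by decide, h1, by rw [uncrossed_iff']; simpa [removeChord, NC'] using h2⟩
    · exact Or.inr ⟨0, 3, by decide, h1, by rw [uncrossed_iff']; simpa [removeChord, NC'] using h2⟩
    · exact Or.inr ⟨1, 4, by decide, h1, by rw [uncrossed_iff']; simpa [removeChord, NC'] using h2⟩

lemma card_iff' (m : Fin 5 → Fin 5 → ℕ) :
    (internalChords.filter fun d => 1 ≤ m d.1 d.2).card ≤ 3 ↔
      ¬((1 ≤ m 1 3 ∧ 1 ≤ m 2 4 ∧ 1 ≤ m 0 3 ∧ 1 ≤ m 1 4) ∨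
        (1 ≤ m 0 2 ∧ 1 ≤ m 2 4 ∧ 1 ≤ m 0 3 ∧ 1 ≤ m 1 4) ∨
        (1 ≤ m 0 2 ∧ 1 ≤ m 1 3 ∧ 1 ≤ m 0 3 ∧ 1 ≤ m 1 4) ∨
        (1 ≤ m 0 2 ∧ 1 ≤ m 1 3 ∧ 1 ≤ m 2 4 ∧ 1 ≤ m 1 4) ∨
        (1 ≤ m 0 2 ∧ 1 ≤ m 1 3 ∧ 1 ≤ m 2 4 ∧ 1 ≤ m 0 3)) := by
  by_cases h1 : 1 ≤ m 0 2 <;> by_cases h2 : 1 ≤ m 1 3 <;> by_cases h3 : 1 ≤ m 2 4 <;>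
    by_cases h4 : 1 ≤ m 0 3 <;> by_cases h5 : 1 ≤ m 1 4 <;>
    simp_all [internalChords, Finset.filter_insert, Finset.filter_singleton]

lemma forall_iff' (m : Fin 5 → Fin 5 → ℕ) (hsym : ∀ i j, m i j = m j i) :
    (∀ i : Fin 5, 2 ≤ m i (i + 2) → m (i + 1) (i + 3) + m (i + 1) (i + 4) ≤ 1) ↔
      ((2 ≤ m 0 2 → m 1 3 + m 1 4 ≤ 1) ∧ (2 ≤ m 1 3 → m 2 4 + m 0 2 ≤ 1) ∧
       (2 ≤ m 2 4 → m 0 3 + m 1 3 ≤ 1) ∧ (2 ≤ m 0 3 → m 1 4 + m 2 4 ≤ 1) ∧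
       (2 ≤ m 1 4 → m 0 2 + m 0 3 ≤ 1)) := by
  constructor
  · intro h
    have e1 := h 0
    have e2 := h 1
    have e3 := h 2
    have e4 := h 3
    have e5 := h 4
    simp only [Fin.reduceAdd] at e1 e2 e3 e4 e5
    rw [hsym 2 0] at e2
    rw [hsym 3 0, hsym 3 1] at e3
    rw [hsym 3 0, hsym 4 1, hsym 4 2] at e4
    rw [hsym 4 1] at e5
    exact ⟨e1, e2, e3, e4, e5⟩
  · intro h i
    obtain ⟨h1, h2, h3, h4, h5⟩ := h
    have hi : i = 0 ∨ i = 1 ∨ i = 2 ∨ i = 3 ∨ i = 4 := by fin_cases i <;> decide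
    rcases hi with rfl | rfl | rfl | rfl | rfl <;> simp only [Fin.reduceAdd, Fin.isValue]
    · exact h1
    · rw [hsym 2 0]; exact h2
    · rw [hsym 3 0, hsym 3 1]; exact h3
    · rw [hsym 3 0, hsym 4 1, hsym 4 2]; exact h4
    · rw [hsym 4 1]; exact h5


def Pk (A B C D E : ℕ) : Prop :=
    (¬((1 ≤ A ∧ 1 ≤ B) ∨ (1 ≤ A ∧ 1 ≤ E) ∨ (1 ≤ D ∧ 1 ≤ E) ∨ (1 ≤ D ∧ 1 ≤ C) ∨ (1 ≤ B ∧ 1 ≤ C)) ∨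
     (1 ≤ A ∧ ¬((1 ≤ A - 1 ∧ 1 ≤ B) ∨ (1 ≤ A - 1 ∧ 1 ≤ E) ∨ (1 ≤ D ∧ 1 ≤ E) ∨ (1 ≤ D ∧ 1 ≤ C) ∨ (1 ≤ B ∧ 1 ≤ C))) ∨
     (1 ≤ B ∧ ¬((1 ≤ A ∧ 1 ≤ B - 1) ∨ (1 ≤ A ∧ 1 ≤ E) ∨ (1 ≤ D ∧ 1 ≤ E) ∨ (1 ≤ D ∧ 1 ≤ C) ∨ (1 ≤ B - 1 ∧ 1 ≤ C))) ∨
     (1 ≤ C ∧ ¬((1 ≤ A ∧ 1 ≤ B) ∨ (1 ≤ A ∧ 1 ≤ E) ∨ (1 ≤ D ∧ 1 ≤ E) ∨ (1 ≤ D ∧ 1 ≤ C - 1) ∨ (1 ≤ B ∧ 1 ≤ C - 1))) ∨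
     (1 ≤ D ∧ ¬((1 ≤ A ∧ 1 ≤ B) ∨ (1 ≤ A ∧ 1 ≤ E) ∨ (1 ≤ D - 1 ∧ 1 ≤ E) ∨ (1 ≤ D - 1 ∧ 1 ≤ C) ∨ (1 ≤ B ∧ 1 ≤ C))) ∨
     (1 ≤ E ∧ ¬((1 ≤ A ∧ 1 ≤ B) ∨ (1 ≤ A ∧ 1 ≤ E - 1) ∨ (1 ≤ D ∧ 1 ≤ E - 1) ∨ (1 ≤ D ∧ 1 ≤ C) ∨ (1 ≤ B ∧ 1 ≤ C)))) ↔
    (¬((1 ≤ B ∧ 1 ≤ C ∧ 1 ≤ D ∧ 1 ≤ E) ∨ (1 ≤ A ∧ 1 ≤ C ∧ 1 ≤ D ∧ 1 ≤ E) ∨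
       (1 ≤ A ∧ 1 ≤ B ∧ 1 ≤ D ∧ 1 ≤ E) ∨ (1 ≤ A ∧ 1 ≤ B ∧ 1 ≤ C ∧ 1 ≤ E) ∨
       (1 ≤ A ∧ 1 ≤ B ∧ 1 ≤ C ∧ 1 ≤ D)) ∧
     ((2 ≤ A → B + E ≤ 1) ∧ (2 ≤ B → C + A ≤ 1) ∧ (2 ≤ C → D + B ≤ 1) ∧
      (2 ≤ D → E + C ≤ 1) ∧ (2 ≤ E → A + D ≤ 1)))

set_option maxHeartbeats 2000000 in
lemma keyBdd (A B C D E : ℕ) (hA : A ≤ 2) (hB : B ≤ 2) (hC : C ≤ 2) (hD : D ≤ 2)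
    (hE : E ≤ 2) : Pk A B C D E := by
  unfold Pk
  interval_cases A <;> interval_cases B <;> interval_cases C <;> interval_cases D <;>
    interval_cases E <;> simp

lemma key (A B C D E : ℕ) : Pk A B C D E := by
  have h := keyBdd (min A 2) (min B 2) (min C 2) (min D 2) (min E 2)
    (by omega) (by omega) (by omega) (by omega) (by omega)
  unfold Pk at h ⊢
  simp only [show (1 ≤ min A 2) ↔ 1 ≤ A from by omega,
    show (1 ≤ min B 2) ↔ 1 ≤ B from by omega,
    show (1 ≤ min C 2) ↔ 1 ≤ C from by omega,
    show (1 ≤ min D 2) ↔ 1 ≤ D from by omega,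
    show (1 ≤ min E 2) ↔ 1 ≤ E from by omega,
    show (1 ≤ min A 2 - 1) ↔ 1 ≤ A - 1 from by omega,
    show (1 ≤ min B 2 - 1) ↔ 1 ≤ B - 1 from by omega,
    show (1 ≤ min C 2 - 1) ↔ 1 ≤ C - 1 from by omega,
    show (1 ≤ min D 2 - 1) ↔ 1 ≤ D - 1 from by omega,
    show (1 ≤ min E 2 - 1) ↔ 1 ≤ E - 1 from by omega,
    show (2 ≤ min A 2) ↔ 2 ≤ A from by omega,
    show (2 ≤ min B 2) ↔ 2 ≤ B from by omega,
    show (2 ≤ min C 2) ↔ 2 ≤ C from by omega,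
    show (2 ≤ min D 2) ↔ 2 ≤ D from by omega,
    show (2 ≤ min E 2) ↔ 2 ≤ E from by omega,
    show (min B 2 + min E 2 ≤ 1) ↔ B + E ≤ 1 from by omega,
    show (min C 2 + min A 2 ≤ 1) ↔ C + A ≤ 1 from by omega,
    show (min D 2 + min B 2 ≤ 1) ↔ D + B ≤ 1 from by omega,
    show (min E 2 + min C 2 ≤ 1) ↔ E + C ≤ 1 from by omega,
    show (min A 2 + min D 2 ≤ 1) ↔ A + D ≤ 1 from by omega] at h
  exact h

/-- For `n = 5`, a diagram with chord multiplicities `m` is uncrossable iff the number of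
internal chords with positive multiplicity is at most 3, and whenever `m_{i,i+2} ≥ 2`
then `m_{i+1,i+3} + m_{i+1,i+4} ≤ 1` (indices modulo 5). -/
theorem stmt17 (m : Fin 5 → Fin 5 → ℕ)
    (hsym : ∀ i j, m i j = m j i) (hdiag : ∀ i, m i i = 0) :
    Uncrossable m ↔
      (internalChords.filter fun d => 1 ≤ m d.1 d.2).card ≤ 3 ∧
        ∀ i : Fin 5, 2 ≤ m i (i + 2) → m (i + 1) (i + 3) + m (i + 1) (i + 4) ≤ 1 := by
  rw [uncrossable_iff', card_iff', forall_iff' m hsym]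
  simp only [NC']
  have h := key (m 0 2) (m 1 3) (m 2 4) (m 0 3) (m 1 4)
  unfold Pk at h
  exact h
end
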